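/- With F as above and positive arguments, the partial derivative of F with respect to r equals (s-1)·x·y·(sx+3sy+x+y) / (4(x+2y)(rx+2sy)²); in particular ∂F/∂r > 0 if s > 1 and ∂F/∂r < 0 if s < 1. -/

import Mathlib

/-!
For fixed `x, y, s`, `F` is a Möbius transformation `r ↦ k (a r + b) / (c r + d)` with `k > 0`,
so its derivative `k (a d - b c) / (c r + d) ^ 2` has the sign of
`a d - b c = s (s - 1) x y ^ 2`.
-/

noncomputable def F (x y r s : ℝ) : ℝ :=
  (((s + 1) * x * y + (3 * s + 1) * y ^ 2) *
      (r * (s + 1) * x * y + s * (s + 3) * y ^ 2)) /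
    (4 * s * y ^ 2 * (x + 2 * y) * (r * x + 2 * s * y))

theorem hasDerivAt_div_affine {𝕜 : Type*} [NontriviallyNormedField 𝕜] {a b c d t : 𝕜}
    (h : c * t + d ≠ 0) :
    HasDerivAt (fun u => (a * u + b) / (c * u + d)) ((a * d - b * c) / (c * t + d) ^ 2) t := by
  have hnum := ((hasDerivAt_id' t).const_mul a).add_const b
  have hden := ((hasDerivAt_id' t).const_mul c).add_const d
  exact (hnum.fun_div hden h).congr_deriv (by ring)

theorem F_eq_mul_div_affine (x y s : ℝ) :
    (fun r => F x y r s) = fun r =>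
      ((s + 1) * x * y + (3 * s + 1) * y ^ 2) / (4 * s * y ^ 2 * (x + 2 * y)) *
        (((s + 1) * x * y * r + s * (s + 3) * y ^ 2) / (x * r + 2 * s * y)) := by
  funext r
  rw [F, mul_div_mul_comm]
  congr 3 <;> ring

theorem stmt2 (x y r s : ℝ) (hx : 0 < x) (hy : 0 < y) (hr : 0 < r) (hs : 0 < s) :
    HasDerivAt (fun t => F x y t s)
      ((s - 1) * x * y * (s * x + 3 * s * y + x + y) /
        (4 * (x + 2 * y) * (r * x + 2 * s * y) ^ 2)) r ∧
    (1 < s →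
      0 < (s - 1) * x * y * (s * x + 3 * s * y + x + y) /
        (4 * (x + 2 * y) * (r * x + 2 * s * y) ^ 2)) ∧
    (s < 1 →
      (s - 1) * x * y * (s * x + 3 * s * y + x + y) /
        (4 * (x + 2 * y) * (r * x + 2 * s * y) ^ 2) < 0) := by
  have hfactor : (s - 1) * x * y * (s * x + 3 * s * y + x + y) /
      (4 * (x + 2 * y) * (r * x + 2 * s * y) ^ 2) =
      (s - 1) * (x * y * (s * x + 3 * s * y + x + y) /
        (4 * (x + 2 * y) * (r * x + 2 * s * y) ^ 2)) := by ring
  have hpos : 0 < x * y * (s * x + 3 * s * y + x + y) /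
      (4 * (x + 2 * y) * (r * x + 2 * s * y) ^ 2) := by positivity
  refine ⟨?_, fun h => ?_, fun h => ?_⟩
  · have hden : 0 < x * r + 2 * s * y := by positivity
    rw [F_eq_mul_div_affine]
    refine ((hasDerivAt_div_affine hden.ne').const_mul _).congr_deriv ?_
    field_simp
    ring
  · rw [hfactor]
    exact mul_pos (by linarith) hpos
  · rw [hfactor]
    exact mul_neg_of_neg_of_pos (by linarith) hpos
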